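/- Let f : ℝⁿ → ℝ ∪ {+∞} be proper with f(x̄) finite, and suppose x̄ is a local minimizer of f. Then for every nonzero u in the critical cone C_f(x̄, 0) = {u : df(x̄)(u) = 0} and every w ∈ ℝⁿ, the parabolic subderivative satisfies d²f(x̄)(u | w) ≥ 0. -/

import Mathlib

open Filter Topology

variable {n : ℕ}

/-- The subderivative of an extended-real-valued function. -/
noncomputable def subderivE (f : EuclideanSpace ℝ (Fin n) → EReal)
    (x u : EuclideanSpace ℝ (Fin n)) : EReal :=
  Filter.liminf
    (fun p : ℝ × EuclideanSpace ℝ (Fin n) =>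
      (f (x + p.1 • p.2) - f x) / ((p.1 : ℝ) : EReal))
    ((𝓝[>] (0:ℝ)) ×ˢ 𝓝 u)

/-- The parabolic subderivative of an extended-real-valued function. -/
noncomputable def parabolicSubderivE (f : EuclideanSpace ℝ (Fin n) → EReal)
    (x u w : EuclideanSpace ℝ (Fin n)) : EReal :=
  Filter.liminf
    (fun p : ℝ × EuclideanSpace ℝ (Fin n) =>
      (f (x + p.1 • u + (p.1 ^ 2 / 2) • p.2) - f x -
          ((p.1 * (subderivE f x u).toReal : ℝ) : EReal)) / ((p.1 ^ 2 / 2 : ℝ) : EReal))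
    ((𝓝[>] (0:ℝ)) ×ˢ 𝓝 w)

/-!
Along a critical direction the first-order term of the parabolic difference quotient vanishes,
so the quotient is `(f (x̄ + t u + t²/2 w') - f x̄) / (t²/2)`. Its argument tends to `x̄` as
`t ↓ 0`, `w' → w`, so eventually the numerator is nonnegative by local minimality, and so is the
liminf.
-/

theorem tendsto_add_smul_add_sq_smul {E : Type*} [AddCommGroup E] [Module ℝ E]
    [TopologicalSpace E] [IsTopologicalAddGroup E] [ContinuousSMul ℝ E] (x u w : E) :
    Tendsto (fun p : ℝ × E => x + p.1 • u + (p.1 ^ 2 / 2) • p.2) (𝓝 (0, w)) (𝓝 x) := by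
  have hcont : Continuous (fun p : ℝ × E => x + p.1 • u + (p.1 ^ 2 / 2) • p.2) := by
    fun_prop
  simpa using hcont.tendsto (0, w)

theorem parabolicSubderivE_of_subderivE_eq_zero (f : EuclideanSpace ℝ (Fin n) → EReal)
    {x u : EuclideanSpace ℝ (Fin n)} (hu : subderivE f x u = 0) (w : EuclideanSpace ℝ (Fin n)) :
    parabolicSubderivE f x u w =
      liminf (fun p : ℝ × EuclideanSpace ℝ (Fin n) =>
          (f (x + p.1 • u + (p.1 ^ 2 / 2) • p.2) - f x) / ((p.1 ^ 2 / 2 : ℝ) : EReal))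
        ((𝓝[>] (0:ℝ)) ×ˢ 𝓝 w) := by
  simp only [parabolicSubderivE, hu, EReal.toReal_zero, mul_zero, EReal.coe_zero, sub_zero]

/-- Second-order necessary optimality condition: at a local minimizer `x̄` of a proper
function `f`, the parabolic subderivative is nonnegative along every nonzero critical
direction (a direction with `df(x̄)(u) = 0`). -/
theorem parabolicSubderiv_nonneg_at_local_min
    (f : EuclideanSpace ℝ (Fin n) → EReal)
    (xb : EuclideanSpace ℝ (Fin n)) (hfin_top : f xb ≠ ⊤) (hfin_bot : f xb ≠ ⊥)
    (hmin : ∀ᶠ x in 𝓝 xb, f xb ≤ f x) :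
    ∀ u : EuclideanSpace ℝ (Fin n), u ≠ 0 → subderivE f xb u = 0 →
      ∀ w : EuclideanSpace ℝ (Fin n), 0 ≤ parabolicSubderivE f xb u w := by
  intro u _ hu w
  have hpath : Tendsto
      (fun p : ℝ × EuclideanSpace ℝ (Fin n) => xb + p.1 • u + (p.1 ^ 2 / 2) • p.2)
      ((𝓝[>] (0:ℝ)) ×ˢ 𝓝 w) (𝓝 xb) :=
    (tendsto_add_smul_add_sq_smul xb u w).mono_left
      (nhds_prod_eq (x := (0:ℝ)) (y := w) ▸ prod_mono nhdsWithin_le_nhds le_rfl)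
  rw [parabolicSubderivE_of_subderivE_eq_zero f hu]
  refine le_liminf_of_le (by isBoundedDefault) ?_
  filter_upwards [hpath.eventually hmin] with p hle
  -- finiteness of `f xb` matters here: in `EReal`, `⊤ - ⊤ = ⊥ - ⊥ = ⊥`
  refine EReal.div_nonneg ((EReal.sub_nonneg (.inr hfin_top) (.inr hfin_bot)).mpr hle) ?_
  exact_mod_cast (by positivity : (0:ℝ) ≤ p.1 ^ 2 / 2)
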